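/- Assume in addition that ρ_B and ρ'_B take values in {0,1} (tuple-level partitioning). Then the covariance of the two correlated sampling estimators satisfies |Cov(ρ_n, ρ'_n)| ≤ (1 − (1 − 1/n)^m) · √(ρ(1 − ρ)) · √(ρ'(1 − ρ')). -/

import Mathlib

open MeasureTheory ProbabilityTheory Finset

noncomputable section

variable {I : Type} [Fintype I] [DecidableEq I]

/-- Block tuples for the relations in `T`: `Π_{j∈T} Fin m_j`. -/
def Blk (m : I → ℕ) (T : Finset I) : Type := ∀ j : T, Fin (m j)

instance (m : I → ℕ) (T : Finset I) : Fintype (Blk m T) := by unfold Blk; infer_instance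
instance (m : I → ℕ) (T : Finset I) : DecidableEq (Blk m T) := by unfold Blk; infer_instance

/-- The mean of `ρ_B` over all block tuples. -/
def blkMean (m : I → ℕ) (T : Finset I) (ρB : Blk m T → ℝ) : ℝ :=
  (Fintype.card (Blk m T) : ℝ)⁻¹ * ∑ b, ρB b

/-- `b` agrees with `l` on the coordinates in `S`. -/
def Agrees (m : I → ℕ) (T S : Finset I) (l : Blk m S) (b : Blk m T) : Prop :=
  ∀ (j : I) (hjS : j ∈ S) (hjT : j ∈ T), b ⟨j, hjT⟩ = l ⟨j, hjS⟩

instance (m : I → ℕ) (T S : Finset I) (l : Blk m S) :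
    DecidablePred (Agrees m T S l) := fun b => by unfold Agrees; infer_instance

/-- `ρ_S(l)`: the average of `ρ_B` over all block tuples agreeing with `l` on `S`. -/
def rhoS (m : I → ℕ) (T : Finset I) (ρB : Blk m T → ℝ) (S : Finset I) (l : Blk m S) : ℝ :=
  ((Finset.univ.filter (Agrees m T S l)).card : ℝ)⁻¹ *
    ∑ b ∈ Finset.univ.filter (Agrees m T S l), ρB b

/-- `σ_S² = |Λ(S)|⁻¹ Σ_{l∈Λ(S)} (ρ_S(l) − ρ)²`. -/
def sigmaSq (m : I → ℕ) (T : Finset I) (ρB : Blk m T → ℝ) (S : Finset I) : ℝ :=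
  (Fintype.card (Blk m S) : ℝ)⁻¹ *
    ∑ l : Blk m S, (rhoS m T ρB S l - blkMean m T ρB) ^ 2

/-- `Cov_S(ρ, ρ') = |Λ(S)|⁻¹ Σ_{l∈Λ(S)} (ρ_S(l) − ρ)(ρ'_S(l) − ρ')`. -/
def covS (m : I → ℕ) (T T' : Finset I) (ρB : Blk m T → ℝ) (ρB' : Blk m T' → ℝ)
    (S : Finset I) : ℝ :=
  (Fintype.card (Blk m S) : ℝ)⁻¹ *
    ∑ l : Blk m S,
      (rhoS m T ρB S l - blkMean m T ρB) * (rhoS m T' ρB' S l - blkMean m T' ρB')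

/-- The sample space `Π_{j∈U} Π_{i=1}^{n} Fin m_j`. -/
def Samp (n : ℕ) (m : I → ℕ) (U : Finset I) : Type := ∀ j : U, Fin n → Fin (m j)

instance (n : ℕ) (m : I → ℕ) (U : Finset I) : Fintype (Samp n m U) := by
  unfold Samp; infer_instance
instance (n : ℕ) (m : I → ℕ) (U : Finset I) : MeasurableSpace (Samp n m U) := ⊤

/-- The uniform probability measure on the sample space. -/
def unif (n : ℕ) (m : I → ℕ) (U : Finset I) : Measure (Samp n m U) :=
  (Fintype.card (Samp n m U) : ENNReal)⁻¹ • Measure.count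

/-- The sampling estimator `ρ_n` for the relations in `T ⊆ U`. -/
def est (n : ℕ) (m : I → ℕ) {U : Finset I} (T : Finset I) (hTU : T ⊆ U)
    (ρB : Blk m T → ℝ) (ω : Samp n m U) : ℝ :=
  ((n : ℝ) ^ T.card)⁻¹ * ∑ i : T → Fin n, ρB fun j => ω ⟨j, hTU j.2⟩ (i j)

/-- Covariance of two real random variables. -/
def cov {Ω : Type*} [MeasurableSpace Ω] (μ : Measure Ω) (X Y : Ω → ℝ) : ℝ :=
  ∫ ω, (X ω - ∫ x, X x ∂μ) * (Y ω - ∫ x, Y x ∂μ) ∂μ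

-- ## merge and restriction
def mergeB (m : I → ℕ) {S T : Finset I} (l : Blk m S) (c : Blk m (T \ S)) : Blk m T :=
  fun j => if h : (j : I) ∈ S then l ⟨j, h⟩ else c ⟨j, Finset.mem_sdiff.mpr ⟨j.2, h⟩⟩

lemma sum_agrees_eq (m : I → ℕ) (S T : Finset I) (l : Blk m S) (f : Blk m T → ℝ) :
    ∑ b ∈ Finset.univ.filter (Agrees m T S l), f b
      = ∑ c : Blk m (T \ S), f (mergeB m l c) := by
  classical
  refine (Finset.sum_nbij' (fun b => (fun j => b ⟨j, (Finset.mem_sdiff.mp j.2).1⟩ : Blk m (T \ S)))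
    (fun c => mergeB m l c) ?_ ?_ ?_ ?_ ?_).symm.symm
  · intro b hb; exact Finset.mem_univ _
  · intro c _
    refine Finset.mem_filter.mpr ⟨Finset.mem_univ _, ?_⟩
    intro j hjS hjT
    simp only [mergeB, dif_pos hjS]
  · intro b hb
    funext j
    simp only [mergeB]
    split_ifs with h
    · exact ((Finset.mem_filter.mp hb).2 j h j.2).symm
    · rfl
  · intro c _
    funext j
    simp only [mergeB, dif_neg (Finset.mem_sdiff.mp j.2).2]
  · intro b hb
    refine congrArg f ?_
    funext j
    simp only [mergeB]
    split_ifs with h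
    · exact (Finset.mem_filter.mp hb).2 j h j.2
    · rfl

lemma card_agrees (m : I → ℕ) (S T : Finset I) (l : Blk m S) :
    ((Finset.univ.filter (Agrees m T S l)).card : ℝ)
      = (Fintype.card (Blk m (T \ S)) : ℝ) := by
  have h := sum_agrees_eq m S T l (fun _ => (1:ℝ))
  simpa [Finset.card_univ] using h

lemma blk_card_pos (m : I → ℕ) (hm : ∀ j, 1 ≤ m j) (T : Finset I) :
    0 < Fintype.card (Blk m T) := by
  have : Nonempty (Blk m T) := ⟨fun j => ⟨0, hm _⟩⟩
  exact Fintype.card_pos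

lemma sum_blk_fiber (m : I → ℕ) {S T : Finset I} (hST : S ⊆ T) (f : Blk m T → ℝ) :
    ∑ l : Blk m S, ∑ b ∈ Finset.univ.filter (Agrees m T S l), f b
      = ∑ b : Blk m T, f b := by
  classical
  have key : ∀ l : Blk m S,
      Finset.univ.filter (Agrees m T S l)
        = Finset.univ.filter (fun b : Blk m T => (fun j => b ⟨j, hST j.2⟩ : Blk m S) = l) := by
    intro l
    ext b
    simp only [Finset.mem_filter, Finset.mem_univ, true_and]
    constructor
    · intro h; funext j; exact h j j.2 (hST j.2)
    · intro h j hjS hjT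
      exact congrFun h (⟨j, hjS⟩ : (S : Finset I))
  calc ∑ l : Blk m S, ∑ b ∈ Finset.univ.filter (Agrees m T S l), f b
      = ∑ l : Blk m S, ∑ b ∈ Finset.univ.filter
          (fun b : Blk m T => (fun j => b ⟨j, hST j.2⟩ : Blk m S) = l), f b := by
        exact Finset.sum_congr rfl fun l _ => by rw [key l]
    _ = ∑ b : Blk m T, f b := by
        convert Finset.sum_fiberwise_of_maps_to (κ := Blk m S)
          (g := fun b : Blk m T => ((fun j => b ⟨j, hST j.2⟩ : Blk m S) : Blk m S))
          (fun b _ => Finset.mem_univ _) f <;> exact Iff.rfl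

lemma card_blk_split (m : I → ℕ) {S T : Finset I} (hST : S ⊆ T) :
    (Fintype.card (Blk m T) : ℝ)
      = (Fintype.card (Blk m S) : ℝ) * (Fintype.card (Blk m (T \ S)) : ℝ) := by
  have h := sum_blk_fiber m hST (fun _ => (1:ℝ))
  simp only [Finset.sum_const, Finset.card_univ, nsmul_eq_mul, mul_one] at h
  rw [← h]
  rw [Finset.sum_congr rfl fun l _ => card_agrees m S T l]
  simp [Finset.card_univ, mul_comm]


lemma sum_filter_rho (m : I → ℕ) (hm : ∀ j, 1 ≤ m j) (S T : Finset I)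
    (ρB : Blk m T → ℝ) (l : Blk m S) :
    ∑ b ∈ Finset.univ.filter (Agrees m T S l), ρB b
      = (Fintype.card (Blk m (T \ S)) : ℝ) * rhoS m T ρB S l := by
  have hA : ((Finset.univ.filter (Agrees m T S l)).card : ℝ) ≠ 0 := by
    rw [card_agrees]
    exact_mod_cast (blk_card_pos m hm (T \ S)).ne'
  unfold rhoS
  rw [← card_agrees m S T l, ← mul_assoc, mul_inv_cancel₀ hA, one_mul]

lemma sum_rhoS (m : I → ℕ) (hm : ∀ j, 1 ≤ m j) {S T : Finset I} (hST : S ⊆ T)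
    (ρB : Blk m T → ℝ) :
    ∑ l : Blk m S, rhoS m T ρB S l
      = (Fintype.card (Blk m S) : ℝ) * blkMean m T ρB := by
  have hA : (Fintype.card (Blk m (T \ S)) : ℝ) ≠ 0 := by
    exact_mod_cast (blk_card_pos m hm (T \ S)).ne'
  have h1 : (Fintype.card (Blk m (T \ S)) : ℝ) * ∑ l : Blk m S, rhoS m T ρB S l
      = ∑ b : Blk m T, ρB b := by
    rw [Finset.mul_sum]
    rw [Finset.sum_congr rfl fun l _ => (sum_filter_rho m hm S T ρB l).symm]
    exact sum_blk_fiber m hST ρB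
  have h2 : (Fintype.card (Blk m T) : ℝ) * blkMean m T ρB = ∑ b : Blk m T, ρB b := by
    unfold blkMean
    have : (Fintype.card (Blk m T) : ℝ) ≠ 0 := by
      exact_mod_cast (blk_card_pos m hm T).ne'
    field_simp
  have h3 := card_blk_split m hST
  have hL : (Fintype.card (Blk m S) : ℝ) ≠ 0 := by
    exact_mod_cast (blk_card_pos m hm S).ne'
  apply mul_left_cancel₀ hA
  rw [h1, ← h2, h3]
  ring
lemma avg_nonneg_le_one {α : Type} {s : Finset α} (hs : 0 < s.card) {f : α → ℝ}
    (hf : ∀ a ∈ s, f a = 0 ∨ f a = 1) :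
    0 ≤ (s.card:ℝ)⁻¹ * ∑ a ∈ s, f a ∧ (s.card:ℝ)⁻¹ * ∑ a ∈ s, f a ≤ 1 := by
  have h0 : ∀ a ∈ s, (0:ℝ) ≤ f a := fun a ha => by rcases hf a ha with h|h <;> simp [h]
  have h1 : ∀ a ∈ s, f a ≤ 1 := fun a ha => by rcases hf a ha with h|h <;> simp [h]
  have hc : (0:ℝ) < (s.card : ℝ) := by exact_mod_cast hs
  constructor
  · exact mul_nonneg (by positivity) (Finset.sum_nonneg h0)
  · have hsum : ∑ a ∈ s, f a ≤ (s.card : ℝ) := by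
      calc ∑ a ∈ s, f a ≤ ∑ a ∈ s, (1:ℝ) := Finset.sum_le_sum h1
        _ = (s.card : ℝ) := by simp
    calc (s.card:ℝ)⁻¹ * ∑ a ∈ s, f a ≤ (s.card:ℝ)⁻¹ * (s.card:ℝ) :=
          mul_le_mul_of_nonneg_left hsum (by positivity)
      _ = 1 := inv_mul_cancel₀ hc.ne'

lemma filter_agrees_card_pos (m : I → ℕ) (hm : ∀ j, 1 ≤ m j) (S T : Finset I) (l : Blk m S) :
    0 < (Finset.univ.filter (Agrees m T S l)).card := by
  have h := card_agrees m S T l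
  have h2 := blk_card_pos m hm (T \ S)
  have : (0:ℝ) < ((Finset.univ.filter (Agrees m T S l)).card : ℝ) := by
    rw [h]; exact_mod_cast h2
  exact_mod_cast this

lemma rhoS_mem (m : I → ℕ) (hm : ∀ j, 1 ≤ m j) (S T : Finset I)
    (ρB : Blk m T → ℝ) (hbin : ∀ b, ρB b = 0 ∨ ρB b = 1) (l : Blk m S) :
    0 ≤ rhoS m T ρB S l ∧ rhoS m T ρB S l ≤ 1 := by
  unfold rhoS
  exact avg_nonneg_le_one (filter_agrees_card_pos m hm S T l) (fun b _ => hbin b)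

lemma blkMean_mem (m : I → ℕ) (hm : ∀ j, 1 ≤ m j) (T : Finset I)
    (ρB : Blk m T → ℝ) (hbin : ∀ b, ρB b = 0 ∨ ρB b = 1) :
    0 ≤ blkMean m T ρB ∧ blkMean m T ρB ≤ 1 := by
  unfold blkMean
  rw [← Finset.card_univ]
  exact avg_nonneg_le_one (by rw [Finset.card_univ]; exact blk_card_pos m hm T)
    (fun b _ => hbin b)

lemma sigmaSq_le (m : I → ℕ) (hm : ∀ j, 1 ≤ m j) {S T : Finset I} (hST : S ⊆ T)
    (ρB : Blk m T → ℝ) (hbin : ∀ b, ρB b = 0 ∨ ρB b = 1) :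
    sigmaSq m T ρB S ≤ blkMean m T ρB * (1 - blkMean m T ρB) := by
  set a := blkMean m T ρB with ha
  set L := (Fintype.card (Blk m S) : ℝ) with hLdef
  have hL : (0:ℝ) < L := by rw [hLdef]; exact_mod_cast blk_card_pos m hm S
  have hS := sum_rhoS m hm hST ρB
  have hsum2 : ∑ l : Blk m S, (rhoS m T ρB S l)^2 ≤ L * a := by
    refine le_trans (Finset.sum_le_sum fun l _ => ?_) (le_of_eq hS)
    have h := rhoS_mem m hm S T ρB hbin l
    nlinarith [h.1, h.2]
  have key : ∑ l : Blk m S, (rhoS m T ρB S l - a)^2 ≤ L * (a * (1-a)) := by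
    have e1 : ∑ l : Blk m S, (rhoS m T ρB S l - a)^2
        = ∑ l : Blk m S, (rhoS m T ρB S l)^2
          - 2*a*(∑ l : Blk m S, rhoS m T ρB S l) + L*a^2 := by
      rw [Finset.sum_congr rfl fun l _ => (by ring :
        (rhoS m T ρB S l - a)^2 = (rhoS m T ρB S l)^2 - 2*a*(rhoS m T ρB S l) + a^2)]
      rw [Finset.sum_add_distrib, Finset.sum_sub_distrib, ← Finset.mul_sum,
        Finset.sum_const, Finset.card_univ, nsmul_eq_mul]
    rw [e1, hS]
    nlinarith [hsum2]
  unfold sigmaSq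
  calc L⁻¹ * ∑ l : Blk m S, (rhoS m T ρB S l - a)^2
      ≤ L⁻¹ * (L * (a * (1-a))) := mul_le_mul_of_nonneg_left key (by positivity)
    _ = a * (1-a) := by field_simp

lemma sqrt_inv_mul_aux (c A B : ℝ) (hc : 0 ≤ c) (hA : 0 ≤ A) (hB : 0 ≤ B) :
    c * (Real.sqrt A * Real.sqrt B) = Real.sqrt (c*A) * Real.sqrt (c*B) := by
  rw [Real.sqrt_mul hc, Real.sqrt_mul hc]
  have h := Real.mul_self_sqrt hc
  linear_combination -(Real.sqrt A * Real.sqrt B) * h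

lemma sigmaSq_nonneg (m : I → ℕ) (hm : ∀ j, 1 ≤ m j) (S T : Finset I) (ρB : Blk m T → ℝ) :
    0 ≤ sigmaSq m T ρB S := by
  unfold sigmaSq
  exact mul_nonneg (by positivity) (Finset.sum_nonneg fun l _ => sq_nonneg _)

lemma abs_covS_le (m : I → ℕ) (hm : ∀ j, 1 ≤ m j) {S T T' : Finset I}
    (hST : S ⊆ T) (hST' : S ⊆ T') (ρB : Blk m T → ℝ) (ρB' : Blk m T' → ℝ)
    (hbin : ∀ b, ρB b = 0 ∨ ρB b = 1) (hbin' : ∀ b, ρB' b = 0 ∨ ρB' b = 1) :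
    |covS m T T' ρB ρB' S|
      ≤ Real.sqrt (blkMean m T ρB * (1 - blkMean m T ρB)) *
          Real.sqrt (blkMean m T' ρB' * (1 - blkMean m T' ρB')) := by
  set L := (Fintype.card (Blk m S) : ℝ) with hLdef
  have hL : (0:ℝ) < L := by rw [hLdef]; exact_mod_cast blk_card_pos m hm S
  set f := fun l : Blk m S => rhoS m T ρB S l - blkMean m T ρB with hf
  set g := fun l : Blk m S => rhoS m T' ρB' S l - blkMean m T' ρB' with hg
  have cs : (∑ l : Blk m S, f l * g l)^2
      ≤ (∑ l : Blk m S, (f l)^2) * (∑ l : Blk m S, (g l)^2) :=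
    Finset.sum_mul_sq_le_sq_mul_sq _ _ _
  have habs : |covS m T T' ρB ρB' S|
      ≤ Real.sqrt (sigmaSq m T ρB S) * Real.sqrt (sigmaSq m T' ρB' S) := by
    have h1 : |covS m T T' ρB ρB' S| = L⁻¹ * |∑ l : Blk m S, f l * g l| := by
      unfold covS
      rw [abs_mul, abs_of_nonneg (by positivity : (0:ℝ) ≤ L⁻¹)]
    rw [h1]
    have h2 : |∑ l : Blk m S, f l * g l|
        ≤ Real.sqrt (∑ l : Blk m S, (f l)^2) * Real.sqrt (∑ l : Blk m S, (g l)^2) := by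
      rw [← Real.sqrt_sq_eq_abs, ← Real.sqrt_mul (Finset.sum_nonneg fun l _ => sq_nonneg _)]
      exact Real.sqrt_le_sqrt cs
    calc L⁻¹ * |∑ l : Blk m S, f l * g l|
        ≤ L⁻¹ * (Real.sqrt (∑ l : Blk m S, (f l)^2) * Real.sqrt (∑ l : Blk m S, (g l)^2)) :=
          mul_le_mul_of_nonneg_left h2 (by positivity)
      _ = Real.sqrt (L⁻¹ * ∑ l : Blk m S, (f l)^2) *
            Real.sqrt (L⁻¹ * ∑ l : Blk m S, (g l)^2) :=
          sqrt_inv_mul_aux L⁻¹ _ _ (by positivity)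
            (Finset.sum_nonneg fun l _ => sq_nonneg _)
            (Finset.sum_nonneg fun l _ => sq_nonneg _)
      _ = Real.sqrt (sigmaSq m T ρB S) * Real.sqrt (sigmaSq m T' ρB' S) := rfl
  refine habs.trans ?_
  have b1 := Real.sqrt_le_sqrt (sigmaSq_le m hm hST ρB hbin)
  have b2 := Real.sqrt_le_sqrt (sigmaSq_le m hm hST' ρB' hbin')
  exact mul_le_mul b1 b2 (Real.sqrt_nonneg _) (Real.sqrt_nonneg _)

lemma covS_empty (m : I → ℕ) (T T' : Finset I) (ρB : Blk m T → ℝ) (ρB' : Blk m T' → ℝ) :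
    covS m T T' ρB ρB' ∅ = 0 := by
  unfold covS
  have key : ∀ (T₀ : Finset I) (ρ₀ : Blk m T₀ → ℝ) (l : Blk m (∅ : Finset I)),
      rhoS m T₀ ρ₀ ∅ l = blkMean m T₀ ρ₀ := by
    intro T₀ ρ₀ l
    unfold rhoS blkMean
    have : Finset.univ.filter (Agrees m T₀ ∅ l) = Finset.univ := by
      ext b
      simp only [Finset.mem_filter, Finset.mem_univ, true_and]
      exact iff_of_true (fun j hjS hjT => absurd hjS (Finset.notMem_empty j)) trivial
    rw [this, Finset.card_univ]
  simp [key]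

lemma covS_eq (m : I → ℕ) (hm : ∀ j, 1 ≤ m j) {S T T' : Finset I}
    (hST : S ⊆ T) (hST' : S ⊆ T') (ρB : Blk m T → ℝ) (ρB' : Blk m T' → ℝ) :
    (Fintype.card (Blk m S) : ℝ)⁻¹ *
        ∑ l : Blk m S, rhoS m T ρB S l * rhoS m T' ρB' S l
      = covS m T T' ρB ρB' S + blkMean m T ρB * blkMean m T' ρB' := by
  set a := blkMean m T ρB with ha
  set b := blkMean m T' ρB' with hb
  set L := (Fintype.card (Blk m S) : ℝ) with hLdef
  have hL : (0:ℝ) < L := by rw [hLdef]; exact_mod_cast blk_card_pos m hm S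
  have h1 := sum_rhoS m hm hST ρB
  have h2 := sum_rhoS m hm hST' ρB'
  unfold covS
  have expand : ∑ l : Blk m S, (rhoS m T ρB S l - a) * (rhoS m T' ρB' S l - b)
      = ∑ l : Blk m S, rhoS m T ρB S l * rhoS m T' ρB' S l
        - b * (∑ l : Blk m S, rhoS m T ρB S l)
        - a * (∑ l : Blk m S, rhoS m T' ρB' S l) + L * (a * b) := by
    rw [Finset.sum_congr rfl fun l _ => (by ring :
      (rhoS m T ρB S l - a) * (rhoS m T' ρB' S l - b)
        = rhoS m T ρB S l * rhoS m T' ρB' S l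
          - b * rhoS m T ρB S l - a * rhoS m T' ρB' S l + a * b)]
    rw [Finset.sum_add_distrib, Finset.sum_sub_distrib, Finset.sum_sub_distrib,
      ← Finset.mul_sum, ← Finset.mul_sum, Finset.sum_const, Finset.card_univ, nsmul_eq_mul]
  rw [expand, h1, h2]
  simp only [← hLdef]
  field_simp
  ring
lemma sum_select {κ γ : Type} [Fintype κ] [Fintype γ] [DecidableEq κ] [DecidableEq γ]
    (β : κ → Type) [∀ k, Fintype (β k)] [∀ k, Nonempty (β k)]
    (e : γ → κ) (he : Function.Injective e) (F : (∀ g, β (e g)) → ℝ) :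
    (Fintype.card (∀ k, β k) : ℝ)⁻¹ * ∑ ω : ∀ k, β k, F (fun g => ω (e g))
      = (Fintype.card (∀ g, β (e g)) : ℝ)⁻¹ * ∑ y : ∀ g, β (e g), F y := by
  classical
  let Z := {k : κ // k ∉ Set.range e}
  let e2 : γ ⊕ Z → κ := Sum.elim e Subtype.val
  have hb : Function.Bijective e2 := by
    constructor
    · rintro (g | z) (g' | z') h
      · exact congrArg Sum.inl (he h)
      · exact absurd ⟨g, h⟩ z'.2
      · exact absurd ⟨g', h.symm⟩ z.2
      · exact congrArg Sum.inr (Subtype.ext h)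
    · intro k
      by_cases h : k ∈ Set.range e
      · exact ⟨Sum.inl h.choose, h.choose_spec⟩
      · exact ⟨Sum.inr ⟨k, h⟩, rfl⟩
  let E3 : (∀ k, β k) ≃ (∀ k', β (e2 k')) :=
    Equiv.piCongrLeft' β (Equiv.ofBijective e2 hb).symm
  let E4 : (∀ k, β k) ≃ (∀ g, β (e g)) × (∀ z : Z, β z.1) :=
    E3.trans (Equiv.sumPiEquivProdPi (fun k' => β (e2 k')))
  have hsum : ∑ ω : ∀ k, β k, F (fun g => ω (e g))
      = ∑ q : (∀ g, β (e g)) × (∀ z : Z, β z.1), F q.1 :=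
    Fintype.sum_equiv E4 _ _ fun ω => rfl
  have hcard : (Fintype.card (∀ k, β k) : ℝ)
      = (Fintype.card (∀ g, β (e g)) : ℝ) * (Fintype.card (∀ z : Z, β z.1) : ℝ) := by
    rw [Fintype.card_congr E4, Fintype.card_prod]; push_cast; ring
  have hZpos : (0:ℝ) < Fintype.card (∀ z : Z, β z.1) := by
    exact_mod_cast Fintype.card_pos
  rw [hsum, Fintype.sum_prod_type, hcard]
  simp only [Finset.sum_const, Finset.card_univ, nsmul_eq_mul]
  rw [← Finset.mul_sum]
  rw [mul_comm (Fintype.card (∀ z : Z, β z.1) : ℝ), mul_inv, mul_assoc]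
  congr 1
  rw [mul_comm, mul_assoc, mul_inv_cancel₀ (ne_of_gt hZpos), mul_one]

lemma samp_sum_select (n : ℕ) (m : I → ℕ) (hm : ∀ j, 1 ≤ m j)
    (U : Finset I) {γ : Type} [Fintype γ] [DecidableEq γ]
    (jf : γ → U) (tf : γ → Fin n)
    (hinj : ∀ g g', jf g = jf g' → tf g = tf g' → g = g')
    (F : (∀ g : γ, Fin (m (jf g))) → ℝ) :
    (Fintype.card (Samp n m U) : ℝ)⁻¹ * ∑ ω : Samp n m U, F (fun g => ω (jf g) (tf g))
      = (Fintype.card (∀ g : γ, Fin (m (jf g))) : ℝ)⁻¹ * ∑ y, F y := by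
  classical
  haveI : ∀ x : Σ _ : U, Fin n, Nonempty (Fin (m x.1)) := fun x => ⟨⟨0, hm _⟩⟩
  have he : Function.Injective (fun g : γ => (⟨jf g, tf g⟩ : Σ _ : U, Fin n)) := by
    intro g g' h
    obtain ⟨h1, h2⟩ := Sigma.mk.inj_iff.mp h
    exact hinj g g' h1 (eq_of_heq h2)
  have key := sum_select (β := fun x : Σ _ : U, Fin n => Fin (m x.1))
    (fun g : γ => (⟨jf g, tf g⟩ : Σ _ : U, Fin n)) he F
  let E : (∀ x : Σ _ : U, Fin n, Fin (m x.1)) ≃ Samp n m U :=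
    Equiv.piCurry (fun (j : U) (_ : Fin n) => Fin (m j))
  have hsum : ∑ ω' : ∀ x : Σ _ : U, Fin n, Fin (m x.1),
        F (fun g => ω' ⟨jf g, tf g⟩)
      = ∑ ω : Samp n m U, F (fun g => ω (jf g) (tf g)) :=
    Fintype.sum_equiv E _ _ fun ω' => rfl
  have hcard : (Fintype.card (∀ x : Σ _ : U, Fin n, Fin (m x.1)) : ℝ)
      = (Fintype.card (Samp n m U) : ℝ) := by
    exact_mod_cast Fintype.card_congr E
  rw [← hsum, ← hcard]
  exact key
lemma exp_single (n : ℕ) (m : I → ℕ) (hm : ∀ j, 1 ≤ m j) {U : Finset I} (T : Finset I)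
    (hTU : T ⊆ U) (ρB : Blk m T → ℝ) (i : T → Fin n) :
    (Fintype.card (Samp n m U) : ℝ)⁻¹ *
        ∑ ω : Samp n m U, ρB (fun j => ω ⟨j, hTU j.2⟩ (i j))
      = blkMean m T ρB := by
  classical
  have hinj : ∀ g g' : T, (⟨g, hTU g.2⟩ : U) = ⟨g', hTU g'.2⟩ → i g = i g' → g = g' := by
    intro g g' h _
    exact Subtype.ext (by simpa using congrArg Subtype.val h)
  have key := samp_sum_select n m hm U (γ := T) (fun j => ⟨j, hTU j.2⟩) i
    (fun g g' h h2 => hinj g g' h h2) (F := fun y => ρB y)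
  exact key
lemma exp_est (n : ℕ) (hn : 1 ≤ n) (m : I → ℕ) (hm : ∀ j, 1 ≤ m j) {U : Finset I}
    (T : Finset I) (hTU : T ⊆ U) (ρB : Blk m T → ℝ) :
    (Fintype.card (Samp n m U) : ℝ)⁻¹ * ∑ ω : Samp n m U, est n m T hTU ρB ω
      = blkMean m T ρB := by
  classical
  unfold est
  have hn0 : (0:ℝ) < (n:ℝ) := by exact_mod_cast hn
  have hc : ((n:ℝ) ^ T.card) ≠ 0 := by positivity
  have hper := exp_single n m hm T hTU ρB
  have hcardfn : (Fintype.card (T → Fin n) : ℝ) = (n:ℝ) ^ T.card := by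
    rw [Fintype.card_fun, Fintype.card_fin, Fintype.card_coe]
    push_cast
    ring
  set N := (Fintype.card (Samp n m U) : ℝ) with hN
  calc N⁻¹ * ∑ ω : Samp n m U,
        (((n:ℝ) ^ T.card)⁻¹ * ∑ i : T → Fin n, ρB fun j => ω ⟨j, hTU j.2⟩ (i j))
      = ((n:ℝ) ^ T.card)⁻¹ * (N⁻¹ *
          ∑ i : T → Fin n, ∑ ω : Samp n m U, ρB fun j => ω ⟨j, hTU j.2⟩ (i j)) := by
        rw [← Finset.mul_sum, Finset.sum_comm]
        ring
    _ = ((n:ℝ) ^ T.card)⁻¹ * ∑ i : T → Fin n,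
          (N⁻¹ * ∑ ω : Samp n m U, ρB fun j => ω ⟨j, hTU j.2⟩ (i j)) := by
        rw [Finset.mul_sum]
    _ = ((n:ℝ) ^ T.card)⁻¹ * ∑ _i : T → Fin n, blkMean m T ρB := by
        rw [Finset.sum_congr rfl fun i _ => hper i]
    _ = blkMean m T ρB := by
        rw [Finset.sum_const, Finset.card_univ, nsmul_eq_mul, hcardfn, ← mul_assoc,
          inv_mul_cancel₀ hc, one_mul]
lemma exp_pair (n : ℕ) (m : I → ℕ) (hm : ∀ j, 1 ≤ m j)
    (R R' : Finset I) (ρB : Blk m R → ℝ) (ρB' : Blk m R' → ℝ)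
    (i : R → Fin n) (i' : R' → Fin n) (S : Finset I)
    (hS : ∀ a : I, a ∈ S ↔ ∃ (h : a ∈ R) (h' : a ∈ R'), i ⟨a, h⟩ = i' ⟨a, h'⟩) :
    (Fintype.card (Samp n m (R ∪ R')) : ℝ)⁻¹ *
        ∑ ω : Samp n m (R ∪ R'),
          (ρB fun j => ω ⟨j, Finset.mem_union_left R' j.2⟩ (i j)) *
          (ρB' fun j => ω ⟨j, Finset.mem_union_right R j.2⟩ (i' j))
      = (Fintype.card (Blk m S) : ℝ)⁻¹ *
          ∑ l : Blk m S, rhoS m R ρB S l * rhoS m R' ρB' S l := by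
  classical
  have hSR : S ⊆ R := by intro a ha; obtain ⟨h, _, _⟩ := (hS a).mp ha; exact h
  have hSR' : S ⊆ R' := by intro a ha; obtain ⟨_, h', _⟩ := (hS a).mp ha; exact h'
  have hag : ∀ (a : I) (ha : a ∈ S), i ⟨a, hSR ha⟩ = i' ⟨a, hSR' ha⟩ := by
    intro a ha; obtain ⟨h, h', he⟩ := (hS a).mp ha; exact he
  set γ := ((R \ S : Finset I) : Type) ⊕ ((R' : Finset I) : Type) with hγ
  let jf : γ → ((R ∪ R' : Finset I) : Type) :=
    Sum.elim (fun j => ⟨j, Finset.mem_union_left R' (Finset.mem_sdiff.mp j.2).1⟩)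
      (fun j => ⟨j, Finset.mem_union_right R j.2⟩)
  let tf : γ → Fin n :=
    Sum.elim (fun j => i ⟨j, (Finset.mem_sdiff.mp j.2).1⟩) (fun j => i' j)
  let F : (∀ g : γ, Fin (m (jf g))) → ℝ := fun y =>
    (ρB fun j => if h : (j : I) ∈ S then y (Sum.inr ⟨j, hSR' h⟩)
      else y (Sum.inl ⟨j, Finset.mem_sdiff.mpr ⟨j.2, h⟩⟩)) *
    (ρB' fun j => y (Sum.inr j))
  have hinj : ∀ g g', jf g = jf g' → tf g = tf g' → g = g' := by
    rintro (g | g) (g' | g') h1 h2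
    · exact congrArg Sum.inl (Subtype.ext (by simpa [jf] using congrArg Subtype.val h1))
    · exfalso
      have hval : (g : I) = g' := by simpa [jf] using congrArg Subtype.val h1
      have hgR : (g : I) ∈ R := (Finset.mem_sdiff.mp g.2).1
      have hgR' : (g : I) ∈ R' := by rw [hval]; exact g'.2
      have h3 : i ⟨g, hgR⟩ = i' g' := h2
      have h4 : i' (⟨g, hgR'⟩ : (R' : Finset I)) = i' g' := congrArg i' (Subtype.ext hval)
      have : (g : I) ∈ S := (hS g).mpr ⟨hgR, hgR', h3.trans h4.symm⟩
      exact (Finset.mem_sdiff.mp g.2).2 this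
    · exfalso
      have hval : (g : I) = g' := by simpa [jf] using congrArg Subtype.val h1
      have hgR : (g' : I) ∈ R := (Finset.mem_sdiff.mp g'.2).1
      have hgR' : (g' : I) ∈ R' := by rw [← hval]; exact g.2
      have h3 : i' g = i ⟨g', hgR⟩ := h2
      have h4 : i' (⟨g', hgR'⟩ : (R' : Finset I)) = i' g := congrArg i' (Subtype.ext hval.symm)
      have : (g' : I) ∈ S := (hS g').mpr ⟨hgR, hgR', (h4.trans h3).symm⟩
      exact (Finset.mem_sdiff.mp g'.2).2 this
    · exact congrArg Sum.inr (Subtype.ext (by simpa [jf] using congrArg Subtype.val h1))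
  have key := samp_sum_select n m hm (R ∪ R') jf tf hinj F
  have hωeq : ∀ ω : Samp n m (R ∪ R'),
      F (fun g => ω (jf g) (tf g))
        = (ρB fun j => ω ⟨j, Finset.mem_union_left R' j.2⟩ (i j)) *
          (ρB' fun j => ω ⟨j, Finset.mem_union_right R j.2⟩ (i' j)) := by
    intro ω
    show (ρB fun j => if h : (j : I) ∈ S then ω (jf (Sum.inr ⟨j, hSR' h⟩)) (tf (Sum.inr ⟨j, hSR' h⟩))
        else ω (jf (Sum.inl ⟨j, Finset.mem_sdiff.mpr ⟨j.2, h⟩⟩))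
          (tf (Sum.inl ⟨j, Finset.mem_sdiff.mpr ⟨j.2, h⟩⟩))) *
      (ρB' fun j => ω (jf (Sum.inr j)) (tf (Sum.inr j))) = _
    congr 1
    · refine congrArg ρB ?_
      funext j
      by_cases h : (j : I) ∈ S
      · exact (dif_pos h).trans
          (congrArg (ω ⟨j, Finset.mem_union_left R' j.2⟩) (hag j h).symm)
      · exact dif_neg h
  rw [Finset.sum_congr rfl fun ω _ => (hωeq ω).symm, key]
  -- now compute the RHS of key
  let E5 : (∀ g : γ, Fin (m (jf g))) ≃ Blk m (R \ S) × Blk m R' :=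
    Equiv.sumPiEquivProdPi (fun g => Fin (m (jf g)))
  have hsum2 : ∑ y, F y
      = ∑ c : Blk m (R \ S), ∑ b' : Blk m R',
          (ρB fun j => if h : (j : I) ∈ S then b' ⟨j, hSR' h⟩
            else c ⟨j, Finset.mem_sdiff.mpr ⟨j.2, h⟩⟩) * ρB' b' := by
    rw [Fintype.sum_equiv E5 F (fun q =>
      (ρB fun j => if h : (j : I) ∈ S then q.2 ⟨j, hSR' h⟩
        else q.1 ⟨j, Finset.mem_sdiff.mpr ⟨j.2, h⟩⟩) * ρB' q.2) (fun y => rfl)]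
    exact Fintype.sum_prod_type _
  have hinner : ∀ c : Blk m (R \ S),
      (∑ b' : Blk m R', (ρB fun j => if h : (j : I) ∈ S then b' ⟨j, hSR' h⟩
            else c ⟨j, Finset.mem_sdiff.mpr ⟨j.2, h⟩⟩) * ρB' b')
        = ∑ l : Blk m S, ρB (mergeB m l c) *
            (∑ b' ∈ Finset.univ.filter (Agrees m R' S l), ρB' b') := by
    intro c
    rw [← sum_blk_fiber m hSR']
    refine Finset.sum_congr rfl fun l _ => ?_
    rw [Finset.mul_sum]
    refine Finset.sum_congr rfl fun b' hb' => ?_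
    congr 1
    refine congrArg ρB ?_
    funext j
    by_cases h : (j : I) ∈ S
    · simp only [dif_pos h, mergeB]
      exact (Finset.mem_filter.mp hb').2 j h (hSR' h)
    · simp only [dif_neg h, mergeB]
  have houter : ∑ y, F y = ∑ l : Blk m S,
      ((Fintype.card (Blk m (R \ S)) : ℝ) * rhoS m R ρB S l) *
      ((Fintype.card (Blk m (R' \ S)) : ℝ) * rhoS m R' ρB' S l) := by
    rw [hsum2, Finset.sum_congr rfl fun c _ => hinner c, Finset.sum_comm]
    refine Finset.sum_congr rfl fun l _ => ?_
    rw [← Finset.sum_mul, ← sum_agrees_eq m S R l ρB, sum_filter_rho m hm S R ρB l,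
      sum_filter_rho m hm S R' ρB' l]
  rw [houter]
  have hA : (0:ℝ) < (Fintype.card (Blk m (R \ S)) : ℝ) := by
    exact_mod_cast blk_card_pos m hm (R \ S)
  have hA'' : (0:ℝ) < (Fintype.card (Blk m (R' \ S)) : ℝ) := by
    exact_mod_cast blk_card_pos m hm (R' \ S)
  have hL : (0:ℝ) < (Fintype.card (Blk m S) : ℝ) := by
    exact_mod_cast blk_card_pos m hm S
  have hcards : (Fintype.card (∀ g : γ, Fin (m (jf g))) : ℝ)
      = (Fintype.card (Blk m (R \ S)) : ℝ) *
        ((Fintype.card (Blk m S) : ℝ) * (Fintype.card (Blk m (R' \ S)) : ℝ)) := by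
    have h1 : (Fintype.card (∀ g : γ, Fin (m (jf g))) : ℝ)
        = (Fintype.card (Blk m (R \ S)) : ℝ) * (Fintype.card (Blk m R') : ℝ) := by
      rw [show Fintype.card (∀ g : γ, Fin (m (jf g)))
          = Fintype.card (Blk m (R \ S) × Blk m R') from Fintype.card_congr E5,
        Fintype.card_prod]
      push_cast; ring
    rw [h1, card_blk_split m hSR']
  rw [hcards]
  rw [Finset.sum_congr rfl fun l _ => (by ring :
    ((Fintype.card (Blk m (R \ S)) : ℝ) * rhoS m R ρB S l) *
      ((Fintype.card (Blk m (R' \ S)) : ℝ) * rhoS m R' ρB' S l)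
    = ((Fintype.card (Blk m (R \ S)) : ℝ) * (Fintype.card (Blk m (R' \ S)) : ℝ)) *
        (rhoS m R ρB S l * rhoS m R' ρB' S l)), ← Finset.mul_sum]
  rw [← mul_assoc]
  congr 1
  field_simp
lemma integral_unif (n : ℕ) (m : I → ℕ) (U : Finset I) (f : Samp n m U → ℝ) :
    ∫ ω, f ω ∂(unif n m U)
      = (Fintype.card (Samp n m U) : ℝ)⁻¹ * ∑ ω, f ω := by
  haveI : MeasurableSingletonClass (Samp n m U) := ⟨fun _ => trivial⟩
  haveI : MeasureTheory.IsFiniteMeasure (unif n m U) := by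
    constructor
    unfold unif
    rw [MeasureTheory.Measure.smul_apply, MeasureTheory.Measure.count_univ, smul_eq_mul]
    rcases eq_or_ne (Fintype.card (Samp n m U)) 0 with h | h
    · simp [h]
    · rw [ENat.card_eq_coe_fintype_card, ENat.toENNReal_coe]
      rw [ENNReal.inv_mul_cancel (by exact_mod_cast h) (ENNReal.natCast_ne_top _)]
      exact ENNReal.one_lt_top
  rw [MeasureTheory.integral_fintype (f := f) (MeasureTheory.Integrable.of_finite)]
  have hpt : ∀ x : Samp n m U,
      ((unif n m U) {x}).toReal = (Fintype.card (Samp n m U) : ℝ)⁻¹ := by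
    intro x
    unfold unif
    rw [MeasureTheory.Measure.smul_apply, MeasureTheory.Measure.count_singleton,
      smul_eq_mul, mul_one, ENNReal.toReal_inv, ENNReal.toReal_natCast]
  simp only [measureReal_def, hpt, smul_eq_mul]
  rw [← Finset.mul_sum]

lemma cov_unif (n : ℕ) (m : I → ℕ) (hm : ∀ j, 1 ≤ m j) (hn : 1 ≤ n) (U : Finset I)
    (X Y : Samp n m U → ℝ) :
    cov (unif n m U) X Y
      = (Fintype.card (Samp n m U) : ℝ)⁻¹ * ∑ ω, X ω * Y ω
        - ((Fintype.card (Samp n m U) : ℝ)⁻¹ * ∑ ω, X ω) *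
          ((Fintype.card (Samp n m U) : ℝ)⁻¹ * ∑ ω, Y ω) := by
  have hN : (0:ℝ) < (Fintype.card (Samp n m U) : ℝ) := by
    haveI : Nonempty (Samp n m U) := ⟨fun j _ => ⟨0, hm _⟩⟩
    exact_mod_cast Fintype.card_pos
  set N := (Fintype.card (Samp n m U) : ℝ) with hNdef
  unfold cov
  rw [integral_unif, integral_unif, integral_unif]
  set a := N⁻¹ * ∑ ω, X ω with hadef
  set b := N⁻¹ * ∑ ω, Y ω with hbdef
  have expand : ∑ ω, (X ω - a) * (Y ω - b)
      = ∑ ω, X ω * Y ω - b * (∑ ω, X ω) - a * (∑ ω, Y ω) + N * (a * b) := by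
    rw [Finset.sum_congr rfl fun ω _ => (by ring :
      (X ω - a) * (Y ω - b) = X ω * Y ω - b * X ω - a * Y ω + a * b)]
    rw [Finset.sum_add_distrib, Finset.sum_sub_distrib, Finset.sum_sub_distrib,
      ← Finset.mul_sum, ← Finset.mul_sum, Finset.sum_const, Finset.card_univ, nsmul_eq_mul]
  rw [expand]
  have hX : ∑ ω, X ω = N * a := by rw [hadef, ← mul_assoc, mul_inv_cancel₀ hN.ne', one_mul]
  have hY : ∑ ω, Y ω = N * b := by rw [hbdef, ← mul_assoc, mul_inv_cancel₀ hN.ne', one_mul]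
  rw [hX, hY]
  simp only [← hNdef]
  field_simp
  ring

lemma sum_restrict (n : ℕ) (hn : 1 ≤ n) {T M : Finset I} (hMT : M ⊆ T)
    (f : (M → Fin n) → ℝ) :
    ∑ i : T → Fin n, f (fun a => i ⟨a, hMT a.2⟩)
      = ((n:ℝ) ^ T.card) * (((n:ℝ) ^ M.card)⁻¹ * ∑ k : M → Fin n, f k) := by
  classical
  haveI : Nonempty (Fin n) := ⟨⟨0, hn⟩⟩
  have he : Function.Injective (fun a : M => (⟨a, hMT a.2⟩ : T)) := by
    intro a a' h
    exact Subtype.ext (by simpa using congrArg Subtype.val h)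
  have key := sum_select (β := fun _ : T => Fin n)
    (fun a : M => (⟨a, hMT a.2⟩ : T)) he f
  have h1 : (Fintype.card (T → Fin n) : ℝ) = (n:ℝ) ^ T.card := by
    rw [Fintype.card_fun, Fintype.card_fin, Fintype.card_coe]; push_cast; ring
  have h2 : (Fintype.card (M → Fin n) : ℝ) = (n:ℝ) ^ M.card := by
    rw [Fintype.card_fun, Fintype.card_fin, Fintype.card_coe]; push_cast; ring
  rw [h1, h2] at key
  have hn0 : (0:ℝ) < (n:ℝ) := by exact_mod_cast hn
  have hpK : ((n:ℝ) ^ T.card) ≠ 0 := by positivity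
  calc ∑ i : T → Fin n, f (fun a => i ⟨a, hMT a.2⟩)
      = ((n:ℝ) ^ T.card) * (((n:ℝ) ^ T.card)⁻¹ * ∑ i : T → Fin n, f (fun a => i ⟨a, hMT a.2⟩)) := by
        rw [← mul_assoc, mul_inv_cancel₀ hpK, one_mul]
    _ = ((n:ℝ) ^ T.card) * (((n:ℝ) ^ M.card)⁻¹ * ∑ k : M → Fin n, f k) := by rw [key]

lemma count_disagree (n : ℕ) (hn : 1 ≤ n) (M : Finset I) :
    ∑ k : M → Fin n, ∑ k' : M → Fin n,
        (if ∀ a : M, k a ≠ k' a then (1:ℝ) else 0)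
      = ((n:ℝ) * ((n:ℝ) - 1)) ^ M.card := by
  classical
  have step1 : ∀ (k k' : M → Fin n),
      (if ∀ a : M, k a ≠ k' a then (1:ℝ) else 0)
        = ∏ a : M, (if k a = k' a then (0:ℝ) else 1) := by
    intro k k'
    by_cases h : ∀ a : M, k a ≠ k' a
    · rw [if_pos h, Finset.prod_congr rfl fun a _ => if_neg (h a)]
      simp
    · rw [if_neg h]
      push_neg at h
      obtain ⟨a, ha⟩ := h
      exact (Finset.prod_eq_zero (Finset.mem_univ a) (by rw [if_pos ha])).symm
  simp only [step1]
  have s2a : ∑ q : (M → Fin n) × (M → Fin n), ∏ a : M, (if q.1 a = q.2 a then (0:ℝ) else 1)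
      = ∑ k : M → Fin n, ∑ k' : M → Fin n, ∏ a : M, (if k a = k' a then (0:ℝ) else 1) :=
    Fintype.sum_prod_type
      (f := fun q : (M → Fin n) × (M → Fin n) => ∏ a : M, (if q.1 a = q.2 a then (0:ℝ) else 1))
  have s2b : ∑ p : M → Fin n × Fin n, ∏ a : M, (if (p a).1 = (p a).2 then (0:ℝ) else 1)
      = ∑ q : (M → Fin n) × (M → Fin n), ∏ a : M, (if q.1 a = q.2 a then (0:ℝ) else 1) :=
    Fintype.sum_equiv (Equiv.arrowProdEquivProdArrow _ _ _) _ _ (fun p => rfl)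
  rw [← s2a, ← s2b]
  have step3 : ∑ p : M → Fin n × Fin n, ∏ a : M, (if (p a).1 = (p a).2 then (0:ℝ) else 1)
      = ∏ a : M, ∑ v : Fin n × Fin n, (if v.1 = v.2 then (0:ℝ) else 1) := by
    rw [← Fintype.piFinset_univ]
    exact Finset.sum_prod_piFinset Finset.univ
      (fun (a : M) (v : Fin n × Fin n) => if v.1 = v.2 then (0:ℝ) else 1)
  rw [step3]
  have step4 : ∑ v : Fin n × Fin n, (if v.1 = v.2 then (0:ℝ) else 1) = (n:ℝ) * ((n:ℝ)-1) := by
    rw [Fintype.sum_prod_type]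
    have per : ∀ a : Fin n, ∑ b : Fin n, (if a = b then (0:ℝ) else 1) = (n:ℝ) - 1 := by
      intro a
      have h0 : ∑ b : Fin n, (if a = b then (0:ℝ) else 1)
          = ∑ b : Fin n, ((1:ℝ) - if a = b then (1:ℝ) else 0) := by
        refine Finset.sum_congr rfl fun b _ => ?_
        by_cases h : a = b <;> simp [h]
      rw [h0, Finset.sum_sub_distrib, Finset.sum_const, Finset.card_univ, Fintype.card_fin,
        Finset.sum_ite_eq]
      simp
    rw [Finset.sum_congr rfl fun a _ => per a, Finset.sum_const, Finset.card_univ,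
      Fintype.card_fin, nsmul_eq_mul]
  rw [step4, Finset.prod_const, Finset.card_univ, Fintype.card_coe]

/-- under tuple-level partitioning (`ρ_B, ρ'_B ∈ {0,1}`),
`|Cov(ρ_n, ρ'_n)| ≤ (1 − (1 − 1/n)^m) · √(ρ(1 − ρ)) · √(ρ'(1 − ρ'))`. -/
theorem stmt10 {I : Type} [Fintype I] [DecidableEq I]
    (n : ℕ) (hn : 1 ≤ n) (m : I → ℕ) (hm : ∀ j, 1 ≤ m j) (R R' : Finset I)
    (hK : 1 ≤ R.card) (hK' : 1 ≤ R'.card) (hm1 : 1 ≤ (R ∩ R').card)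
    (ρB : Blk m R → ℝ) (ρB' : Blk m R' → ℝ)
    (hbin : ∀ b, ρB b = 0 ∨ ρB b = 1) (hbin' : ∀ b, ρB' b = 0 ∨ ρB' b = 1) :
    |cov (unif n m (R ∪ R'))
        (est n m R Finset.subset_union_left ρB)
        (est n m R' Finset.subset_union_right ρB')|
      ≤ (1 - (1 - (n : ℝ)⁻¹) ^ (R ∩ R').card) *
          Real.sqrt (blkMean m R ρB * (1 - blkMean m R ρB)) *
          Real.sqrt (blkMean m R' ρB' * (1 - blkMean m R' ρB')) := by
  classical
  have hMR : R ∩ R' ⊆ R := Finset.inter_subset_left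
  have hMR' : R ∩ R' ⊆ R' := Finset.inter_subset_right
  set M := R ∩ R' with hMdef
  set U := R ∪ R' with hUdef
  set N := (Fintype.card (Samp n m U) : ℝ) with hNdef
  have hn0 : (0:ℝ) < (n:ℝ) := by exact_mod_cast hn
  set ρ := blkMean m R ρB with hρdef
  set ρ' := blkMean m R' ρB' with hρ'def
  set C := Real.sqrt (ρ * (1 - ρ)) * Real.sqrt (ρ' * (1 - ρ')) with hCdef
  have hC : 0 ≤ C := mul_nonneg (Real.sqrt_nonneg _) (Real.sqrt_nonneg _)
  set Sf : (R → Fin n) → (R' → Fin n) → Finset I := fun i i' =>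
    M.filter (fun a => ∀ h : a ∈ M, i ⟨a, hMR h⟩ = i' ⟨a, hMR' h⟩) with hSfdef
  have hSmem : ∀ (i : R → Fin n) (i' : R' → Fin n) (a : I),
      a ∈ Sf i i' ↔ ∃ (h : a ∈ R) (h' : a ∈ R'), i ⟨a, h⟩ = i' ⟨a, h'⟩ := by
    intro i i' a
    simp only [Sf, Finset.mem_filter]
    constructor
    · rintro ⟨haM, hall⟩
      exact ⟨hMR haM, hMR' haM, hall haM⟩
    · rintro ⟨h, h', he⟩
      have haM : a ∈ M := Finset.mem_inter.mpr ⟨h, h'⟩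
      exact ⟨haM, fun _ => he⟩
  have hSfR : ∀ i i', Sf i i' ⊆ R := by
    intro i i' a ha
    obtain ⟨h, _, _⟩ := (hSmem i i' a).mp ha
    exact h
  have hSfR' : ∀ i i', Sf i i' ⊆ R' := by
    intro i i' a ha
    obtain ⟨_, h', _⟩ := (hSmem i i' a).mp ha
    exact h'
  have hmean : N⁻¹ * ∑ ω, est n m R Finset.subset_union_left ρB ω = ρ :=
    exp_est n hn m hm R Finset.subset_union_left ρB
  have hmean' : N⁻¹ * ∑ ω, est n m R' Finset.subset_union_right ρB' ω = ρ' :=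
    exp_est n hn m hm R' Finset.subset_union_right ρB'
  have hprod : ∀ ω : Samp n m U,
      est n m R Finset.subset_union_left ρB ω * est n m R' Finset.subset_union_right ρB' ω
        = (((n:ℝ) ^ R.card)⁻¹ * ((n:ℝ) ^ R'.card)⁻¹) *
            ∑ i : R → Fin n, ∑ i' : R' → Fin n,
              (ρB fun j => ω ⟨j, Finset.subset_union_left j.2⟩ (i j)) *
              (ρB' fun j => ω ⟨j, Finset.subset_union_right j.2⟩ (i' j)) := by
    intro ω
    unfold est
    rw [← Finset.sum_mul_sum]
    ring
  have hpair : ∀ (i : R → Fin n) (i' : R' → Fin n),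
      N⁻¹ * ∑ ω : Samp n m U,
          (ρB fun j => ω ⟨j, Finset.subset_union_left j.2⟩ (i j)) *
          (ρB' fun j => ω ⟨j, Finset.subset_union_right j.2⟩ (i' j))
        = covS m R R' ρB ρB' (Sf i i') + ρ * ρ' := by
    intro i i'
    have h1 := exp_pair n m hm R R' ρB ρB' i i' (Sf i i') (hSmem i i')
    have h2 := covS_eq m hm (hSfR i i') (hSfR' i i') ρB ρB'
    exact h1.trans h2
  have hXY : N⁻¹ * ∑ ω, (est n m R Finset.subset_union_left ρB ω *
      est n m R' Finset.subset_union_right ρB' ω)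
      = (((n:ℝ) ^ R.card)⁻¹ * ((n:ℝ) ^ R'.card)⁻¹) *
          ∑ i : R → Fin n, ∑ i' : R' → Fin n,
            (covS m R R' ρB ρB' (Sf i i') + ρ * ρ') := by
    have swap : ∑ ω : Samp n m U, ∑ i : R → Fin n, ∑ i' : R' → Fin n,
        ((ρB fun j => ω ⟨j, Finset.subset_union_left j.2⟩ (i j)) *
         (ρB' fun j => ω ⟨j, Finset.subset_union_right j.2⟩ (i' j)))
        = ∑ i : R → Fin n, ∑ i' : R' → Fin n, ∑ ω : Samp n m U,
            ((ρB fun j => ω ⟨j, Finset.subset_union_left j.2⟩ (i j)) *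
             (ρB' fun j => ω ⟨j, Finset.subset_union_right j.2⟩ (i' j))) := by
      rw [Finset.sum_comm]
      exact Finset.sum_congr rfl fun i _ => Finset.sum_comm
    calc N⁻¹ * ∑ ω, (est n m R Finset.subset_union_left ρB ω *
            est n m R' Finset.subset_union_right ρB' ω)
        = N⁻¹ * ((((n:ℝ) ^ R.card)⁻¹ * ((n:ℝ) ^ R'.card)⁻¹) *
            ∑ ω : Samp n m U, ∑ i : R → Fin n, ∑ i' : R' → Fin n,
              ((ρB fun j => ω ⟨j, Finset.subset_union_left j.2⟩ (i j)) *
               (ρB' fun j => ω ⟨j, Finset.subset_union_right j.2⟩ (i' j)))) := by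
          rw [Finset.sum_congr rfl fun ω _ => hprod ω, ← Finset.mul_sum]
      _ = (((n:ℝ) ^ R.card)⁻¹ * ((n:ℝ) ^ R'.card)⁻¹) *
            (N⁻¹ * ∑ i : R → Fin n, ∑ i' : R' → Fin n, ∑ ω : Samp n m U,
              ((ρB fun j => ω ⟨j, Finset.subset_union_left j.2⟩ (i j)) *
               (ρB' fun j => ω ⟨j, Finset.subset_union_right j.2⟩ (i' j)))) := by
          rw [swap]; ring
      _ = (((n:ℝ) ^ R.card)⁻¹ * ((n:ℝ) ^ R'.card)⁻¹) *
            ∑ i : R → Fin n, ∑ i' : R' → Fin n, (N⁻¹ * ∑ ω : Samp n m U,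
              ((ρB fun j => ω ⟨j, Finset.subset_union_left j.2⟩ (i j)) *
               (ρB' fun j => ω ⟨j, Finset.subset_union_right j.2⟩ (i' j)))) := by
          congr 1
          rw [Finset.mul_sum]
          exact Finset.sum_congr rfl fun i _ => Finset.mul_sum _ _ _
      _ = (((n:ℝ) ^ R.card)⁻¹ * ((n:ℝ) ^ R'.card)⁻¹) *
            ∑ i : R → Fin n, ∑ i' : R' → Fin n,
              (covS m R R' ρB ρB' (Sf i i') + ρ * ρ') := by
          rw [Finset.sum_congr rfl fun i _ => Finset.sum_congr rfl fun i' _ => hpair i i']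
  have hfnR : (Fintype.card (R → Fin n) : ℝ) = (n:ℝ) ^ R.card := by
    rw [Fintype.card_fun, Fintype.card_fin, Fintype.card_coe]; push_cast; ring
  have hfnR' : (Fintype.card (R' → Fin n) : ℝ) = (n:ℝ) ^ R'.card := by
    rw [Fintype.card_fun, Fintype.card_fin, Fintype.card_coe]; push_cast; ring
  have hpK : ((n:ℝ) ^ R.card) ≠ 0 := by positivity
  have hpK' : ((n:ℝ) ^ R'.card) ≠ 0 := by positivity
  have hcovsum : cov (unif n m U)
        (est n m R Finset.subset_union_left ρB)
        (est n m R' Finset.subset_union_right ρB')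
      = (((n:ℝ) ^ R.card)⁻¹ * ((n:ℝ) ^ R'.card)⁻¹) *
          ∑ i : R → Fin n, ∑ i' : R' → Fin n, covS m R R' ρB ρB' (Sf i i') := by
    rw [cov_unif n m hm hn U _ _, hXY, hmean, hmean']
    have split : ∑ i : R → Fin n, ∑ i' : R' → Fin n,
        (covS m R R' ρB ρB' (Sf i i') + ρ * ρ')
        = (∑ i : R → Fin n, ∑ i' : R' → Fin n, covS m R R' ρB ρB' (Sf i i'))
          + ((n:ℝ) ^ R.card * (n:ℝ) ^ R'.card) * (ρ * ρ') := by
      rw [Finset.sum_congr rfl fun i _ => Finset.sum_add_distrib, Finset.sum_add_distrib]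
      congr 1
      rw [Finset.sum_const, Finset.sum_const, Finset.card_univ, Finset.card_univ,
        nsmul_eq_mul, nsmul_eq_mul, hfnR, hfnR']
      ring
    rw [split]
    field_simp
    ring
  rw [hcovsum]
  set g : (M → Fin n) → (M → Fin n) → ℝ := fun k k' =>
    if (∀ a : M, k a ≠ k' a) then 0 else C with hgdef
  have hterm : ∀ (i : R → Fin n) (i' : R' → Fin n),
      |covS m R R' ρB ρB' (Sf i i')|
        ≤ g (fun a => i ⟨a, hMR a.2⟩) (fun a => i' ⟨a, hMR' a.2⟩) := by
    intro i i'
    by_cases hq : ∀ a : M, i ⟨a, hMR a.2⟩ ≠ i' ⟨a, hMR' a.2⟩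
    · have hg : g (fun a => i ⟨a, hMR a.2⟩) (fun a => i' ⟨a, hMR' a.2⟩) = 0 := by
        simp only [hgdef]
        exact if_pos hq
      rw [hg]
      have hempty : Sf i i' = ∅ := by
        apply Finset.eq_empty_iff_forall_notMem.mpr
        intro a ha
        obtain ⟨h, h', he⟩ := (hSmem i i' a).mp ha
        exact hq ⟨a, Finset.mem_inter.mpr ⟨h, h'⟩⟩ he
      rw [hempty, covS_empty]
      simp
    · have hg : g (fun a => i ⟨a, hMR a.2⟩) (fun a => i' ⟨a, hMR' a.2⟩) = C := by
        simp only [hgdef]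
        exact if_neg hq
      rw [hg, hCdef, hρdef, hρ'def]
      exact abs_covS_le m hm (hSfR i i') (hSfR' i i') ρB ρB' hbin hbin'
  have habs : |(((n:ℝ) ^ R.card)⁻¹ * ((n:ℝ) ^ R'.card)⁻¹) *
      ∑ i : R → Fin n, ∑ i' : R' → Fin n, covS m R R' ρB ρB' (Sf i i')|
      ≤ (((n:ℝ) ^ R.card)⁻¹ * ((n:ℝ) ^ R'.card)⁻¹) *
        ∑ i : R → Fin n, ∑ i' : R' → Fin n,
          g (fun a => i ⟨a, hMR a.2⟩) (fun a => i' ⟨a, hMR' a.2⟩) := by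
    rw [abs_mul, abs_of_nonneg (by positivity : (0:ℝ) ≤ ((n:ℝ) ^ R.card)⁻¹ * ((n:ℝ) ^ R'.card)⁻¹)]
    refine mul_le_mul_of_nonneg_left ?_ (by positivity)
    refine (Finset.abs_sum_le_sum_abs _ _).trans ?_
    refine Finset.sum_le_sum fun i _ => ?_
    refine (Finset.abs_sum_le_sum_abs _ _).trans ?_
    exact Finset.sum_le_sum fun i' _ => hterm i i'
  refine habs.trans ?_
  -- counting
  have hgsum : ∑ k : M → Fin n, ∑ k' : M → Fin n, g k k'
      = ((n:ℝ) ^ M.card * (n:ℝ) ^ M.card) * C - C * ((n:ℝ) * ((n:ℝ) - 1)) ^ M.card := by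
    have hgsplit : ∀ k k', g k k'
        = C - C * (if (∀ a : M, k a ≠ k' a) then (1:ℝ) else 0) := by
      intro k k'
      by_cases h : ∀ a : M, k a ≠ k' a
      · simp only [hgdef]
        rw [if_pos h, if_pos h]
        ring
      · simp only [hgdef]
        rw [if_neg h, if_neg h]
        ring
    rw [Finset.sum_congr rfl fun k _ =>
      Finset.sum_congr rfl fun k' _ => hgsplit k k']
    rw [Finset.sum_congr rfl fun k _ => Finset.sum_sub_distrib _ _, Finset.sum_sub_distrib]
    have hPcard : (Fintype.card (M → Fin n) : ℝ) = (n:ℝ) ^ M.card := by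
      rw [Fintype.card_fun, Fintype.card_fin, Fintype.card_coe]; push_cast; ring
    congr 1
    · simp only [Finset.sum_const, Finset.card_univ, smul_smul, nsmul_eq_mul]
      push_cast
      rw [hPcard]
      ring
    · rw [Finset.sum_congr rfl fun k _ => (Finset.mul_sum _ _ _).symm, ← Finset.mul_sum,
        count_disagree n hn M]
  have hrestr : ∑ i : R → Fin n, ∑ i' : R' → Fin n,
      g (fun a => i ⟨a, hMR a.2⟩) (fun a => i' ⟨a, hMR' a.2⟩)
      = ((n:ℝ) ^ R.card) * (((n:ℝ) ^ M.card)⁻¹ *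
          (((n:ℝ) ^ R'.card) * (((n:ℝ) ^ M.card)⁻¹ *
            (((n:ℝ) ^ M.card * (n:ℝ) ^ M.card) * C
              - C * ((n:ℝ) * ((n:ℝ) - 1)) ^ M.card)))) := by
    have inner : ∀ i : R → Fin n,
        ∑ i' : R' → Fin n, g (fun a => i ⟨a, hMR a.2⟩) (fun a => i' ⟨a, hMR' a.2⟩)
          = ((n:ℝ) ^ R'.card) * (((n:ℝ) ^ M.card)⁻¹ *
              ∑ k' : M → Fin n, g (fun a => i ⟨a, hMR a.2⟩) k') := by
      intro i
      exact sum_restrict n hn hMR' (fun k' => g (fun a => i ⟨a, hMR a.2⟩) k')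
    rw [Finset.sum_congr rfl fun i _ => inner i]
    have outer := sum_restrict n hn hMR (fun k : M → Fin n =>
      ((n:ℝ) ^ R'.card) * (((n:ℝ) ^ M.card)⁻¹ * ∑ k' : M → Fin n, g k k'))
    rw [outer]
    congr 1
    rw [← Finset.mul_sum, ← Finset.mul_sum, hgsum]
  rw [hrestr]
  -- final arithmetic
  have hpM : ((n:ℝ) ^ M.card) ≠ 0 := by positivity
  have hpow : (1 - (n:ℝ)⁻¹) ^ M.card
      = ((n:ℝ) * ((n:ℝ) - 1)) ^ M.card * (((n:ℝ) ^ M.card) * ((n:ℝ) ^ M.card))⁻¹ := by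
    have h1 : (1 - (n:ℝ)⁻¹) = ((n:ℝ) * ((n:ℝ) - 1)) * (((n:ℝ)) * ((n:ℝ)))⁻¹ := by
      field_simp
    rw [h1, mul_pow, inv_pow, mul_pow, mul_pow]
  apply le_of_eq
  rw [hpow, hCdef]
  field_simp

end
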